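/- Let n ≥ 3 and let F(λ) = σ_n(λ)/σ_{n-2}(λ) on the open positive cone in ℝ^n. Then for every λ ∈ ℝ^n with λ_1 ≥ λ_2 ≥ ⋯ ≥ λ_n > 0: (i) for every index i ≠ n, ∂F/∂λ_i(λ) ≥ F(λ)²/(λ_i²·λ_n); and (ii) ∂F/∂λ_n(λ) ≥ F(λ)²/(λ_n²·λ_{n-1}). -/

import Mathlib

/-- The k-th elementary symmetric polynomial of `lam : Fin n → ℝ`. -/
noncomputable def esig (n k : ℕ) (lam : Fin n → ℝ) : ℝ :=
  ∑ s ∈ Finset.powersetCard k (Finset.univ : Finset (Fin n)), ∏ j ∈ s, lam j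

/-- The quotient operator `F = σ_n / σ_{n-2}`. -/
noncomputable def Fquot (n : ℕ) (lam : Fin n → ℝ) : ℝ :=
  esig n n lam / esig n (n - 2) lam

/-- The partial derivative of `F = σ_n/σ_{n-2}` in the `i`-th coordinate at `lam`. -/
noncomputable def partialF (n : ℕ) (i : Fin n) (lam : Fin n → ℝ) : ℝ :=
  deriv (fun t : ℝ => Fquot n (Function.update lam i t)) (lam i)

/-- Constant coefficient of `t ↦ esig n k (update lam i t)`. -/
noncomputable def Acoef (n k : ℕ) (i : Fin n) (lam : Fin n → ℝ) : ℝ :=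
  ∑ s ∈ (Finset.powersetCard k (Finset.univ : Finset (Fin n))).filter (fun s => i ∉ s),
    ∏ j ∈ s, lam j

/-- Linear coefficient of `t ↦ esig n k (update lam i t)`. -/
noncomputable def Bcoef (n k : ℕ) (i : Fin n) (lam : Fin n → ℝ) : ℝ :=
  ∑ s ∈ (Finset.powersetCard k (Finset.univ : Finset (Fin n))).filter (fun s => i ∈ s),
    ∏ j ∈ s.erase i, lam j

lemma esig_update (n k : ℕ) (i : Fin n) (lam : Fin n → ℝ) (t : ℝ) :
    esig n k (Function.update lam i t) = Acoef n k i lam + Bcoef n k i lam * t := by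
  unfold esig Acoef Bcoef
  rw [← Finset.sum_filter_add_sum_filter_not
      (Finset.powersetCard k (Finset.univ : Finset (Fin n))) (fun s => i ∈ s),
      Finset.sum_mul]
  rw [add_comm]
  congr 1
  · exact Finset.sum_congr rfl fun s hs => by
      rw [Finset.prod_update_of_notMem (Finset.mem_filter.mp hs).2]
  · refine Finset.sum_congr rfl fun s hs => ?_
    rw [Finset.prod_update_of_mem (Finset.mem_filter.mp hs).2, Finset.sdiff_singleton_eq_erase,
      mul_comm]

lemma esig_pos (n k : ℕ) (hk : k ≤ n) (lam : Fin n → ℝ) (hpos : ∀ i, 0 < lam i) :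
    0 < esig n k lam := by
  apply Finset.sum_pos
  · intro s _; exact Finset.prod_pos fun j _ => hpos j
  · rw [Finset.powersetCard_nonempty]; simpa using hk

lemma pcn_top (n : ℕ) :
    Finset.powersetCard n (Finset.univ : Finset (Fin n)) = {Finset.univ} := by
  have h := Finset.powersetCard_self (Finset.univ : Finset (Fin n))
  rwa [Finset.card_univ, Fintype.card_fin] at h

lemma Acoef_top (n : ℕ) (i : Fin n) (lam : Fin n → ℝ) : Acoef n n i lam = 0 := by
  unfold Acoef
  rw [pcn_top, Finset.filter_singleton]
  simp

lemma Bcoef_top (n : ℕ) (i : Fin n) (lam : Fin n → ℝ) :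
    Bcoef n n i lam = ∏ j ∈ Finset.univ.erase i, lam j := by
  unfold Bcoef
  rw [pcn_top, Finset.filter_singleton]
  simp

lemma key (n : ℕ) (hn : 3 ≤ n) (lam : Fin n → ℝ) (hpos : ∀ i, 0 < lam i)
    (i m : Fin n) (him : i ≠ m) :
    Fquot n lam ^ 2 / (lam i ^ 2 * lam m) ≤ partialF n i lam := by
  have h2n : n - 2 ≤ n := Nat.sub_le _ _
  have hσ2pos : 0 < esig n (n - 2) lam := esig_pos n (n - 2) h2n lam hpos
  have hBnpos : 0 < Bcoef n n i lam := by
    rw [Bcoef_top]; exact Finset.prod_pos fun j _ => hpos j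
  have hupd : Function.update lam i (lam i) = lam := Function.update_eq_self i lam
  -- evaluation at t = lam i
  have hσ2eq : esig n (n - 2) lam = Acoef n (n - 2) i lam + Bcoef n (n - 2) i lam * lam i := by
    have h := esig_update n (n - 2) i lam (lam i); rwa [hupd] at h
  have hσneq : esig n n lam = Bcoef n n i lam * lam i := by
    have h := esig_update n n i lam (lam i)
    rwa [hupd, Acoef_top, zero_add] at h
  -- compute the derivative
  have hσ2ne : Acoef n (n - 2) i lam + Bcoef n (n - 2) i lam * lam i ≠ 0 := by
    rw [← hσ2eq]; exact ne_of_gt hσ2pos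
  have hfd : HasDerivAt (fun t : ℝ => Acoef n n i lam + Bcoef n n i lam * t)
      (Bcoef n n i lam) (lam i) := by
    simpa using ((hasDerivAt_id (lam i)).const_mul (Bcoef n n i lam)).const_add (Acoef n n i lam)
  have hgd : HasDerivAt (fun t : ℝ => Acoef n (n - 2) i lam + Bcoef n (n - 2) i lam * t)
      (Bcoef n (n - 2) i lam) (lam i) := by
    simpa using
      ((hasDerivAt_id (lam i)).const_mul (Bcoef n (n - 2) i lam)).const_add (Acoef n (n - 2) i lam)
  have hdiv := hfd.div hgd hσ2ne
  have hPF : partialF n i lam =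
      (Bcoef n n i lam * esig n (n - 2) lam - esig n n lam * Bcoef n (n - 2) i lam) /
        esig n (n - 2) lam ^ 2 := by
    unfold partialF Fquot
    have hfun : (fun t : ℝ => esig n n (Function.update lam i t) /
        esig n (n - 2) (Function.update lam i t)) =
        fun t : ℝ => (Acoef n n i lam + Bcoef n n i lam * t) /
          (Acoef n (n - 2) i lam + Bcoef n (n - 2) i lam * t) := by
      funext t
      rw [esig_update, esig_update]
    rw [hfun, (show HasDerivAt (fun t : ℝ => (Acoef n n i lam + Bcoef n n i lam * t) /
        (Acoef n (n - 2) i lam + Bcoef n (n - 2) i lam * t)) _ (lam i) from hdiv).deriv, ← hσ2eq, Acoef_top, zero_add, ← hσneq]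
  rw [hPF]
  -- numerator equals Bn * A2
  have hnum : Bcoef n n i lam * esig n (n - 2) lam - esig n n lam * Bcoef n (n - 2) i lam =
      Bcoef n n i lam * Acoef n (n - 2) i lam := by
    rw [hσ2eq, hσneq]; ring
  rw [hnum]
  -- lower bound for A2 by a single term
  have hcard2 : ({i, m} : Finset (Fin n)).card = 2 := Finset.card_pair him
  have hs0card : (Finset.univ \ {i, m} : Finset (Fin n)).card = n - 2 := by
    rw [Finset.card_sdiff_of_subset (Finset.subset_univ _), Finset.card_univ, Fintype.card_fin, hcard2]
  have hs0mem : (Finset.univ \ {i, m} : Finset (Fin n)) ∈ (Finset.powersetCard (n - 2)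
      (Finset.univ : Finset (Fin n))).filter (fun s => i ∉ s) := by
    rw [Finset.mem_filter, Finset.mem_powersetCard]
    refine ⟨⟨Finset.subset_univ _, hs0card⟩, by simp⟩
  have hP0pos : 0 < ∏ j ∈ (Finset.univ \ {i, m} : Finset (Fin n)), lam j :=
    Finset.prod_pos fun j _ => hpos j
  have hA2ge : ∏ j ∈ (Finset.univ \ {i, m} : Finset (Fin n)), lam j ≤ Acoef n (n - 2) i lam := by
    unfold Acoef
    exact Finset.single_le_sum (f := fun s => ∏ j ∈ s, lam j) (fun s _ => Finset.prod_nonneg fun j _ => (hpos j).le) hs0mem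
  -- σn = P0 * (lam i * lam m)
  have hsplit : (∏ j ∈ (Finset.univ \ {i, m} : Finset (Fin n)), lam j) * (lam i * lam m) =
      esig n n lam := by
    have h := Finset.prod_sdiff (f := lam) (Finset.subset_univ ({i, m} : Finset (Fin n)))
    rw [Finset.prod_pair him] at h
    rw [h]
    unfold esig
    rw [pcn_top]
    simp
  -- key square identity
  have hkey : esig n n lam ^ 2 = lam i ^ 2 * lam m *
      (Bcoef n n i lam * ∏ j ∈ (Finset.univ \ {i, m} : Finset (Fin n)), lam j) := by
    rw [pow_two]
    nth_rewrite 1 [hσneq]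
    rw [← hsplit]
    ring
  have hLHS : Fquot n lam ^ 2 / (lam i ^ 2 * lam m) =
      (Bcoef n n i lam * ∏ j ∈ (Finset.univ \ {i, m} : Finset (Fin n)), lam j) /
        esig n (n - 2) lam ^ 2 := by
    unfold Fquot
    rw [div_pow, div_div, hkey, mul_comm (esig n (n - 2) lam ^ 2) (lam i ^ 2 * lam m)]
    exact mul_div_mul_left _ _ (ne_of_gt (mul_pos (pow_pos (hpos i) 2) (hpos m)))
  rw [hLHS]
  gcongr

/-- For decreasingly ordered positive `λ`: (i) for `i ≠ n`,
`∂F/∂λ_i(λ) ≥ F(λ)²/(λ_i²·λ_n)`; and (ii) `∂F/∂λ_n(λ) ≥ F(λ)²/(λ_n²·λ_{n-1})`. -/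
theorem stmt_15 (n : ℕ) (hn : 3 ≤ n) (lam : Fin n → ℝ)
    (hord : ∀ i j : Fin n, i ≤ j → lam j ≤ lam i) (hpos : ∀ i, 0 < lam i) :
    (∀ i : Fin n, i ≠ ⟨n - 1, by omega⟩ →
      (Fquot n lam) ^ 2 / ((lam i) ^ 2 * lam ⟨n - 1, by omega⟩) ≤ partialF n i lam) ∧
    (Fquot n lam) ^ 2 / ((lam ⟨n - 1, by omega⟩) ^ 2 * lam ⟨n - 2, by omega⟩) ≤
      partialF n ⟨n - 1, by omega⟩ lam := by
  constructor
  · intro i hi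
    exact key n hn lam hpos i ⟨n - 1, by omega⟩ hi
  · refine key n hn lam hpos ⟨n - 1, by omega⟩ ⟨n - 2, by omega⟩ ?_
    simp only [ne_eq, Fin.mk.injEq]
    omega
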